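/- arXiv:2512.00897 — 2 statements merged into one kernel-verified Lean document; each statement's English description precedes it below -/
import Mathlib

section
/- The function V_S is strictly concave on the convex set [0,∞) × [0,∞) ⊆ ℝ²: for all distinct points (n0,n1), (m0,m1) in [0,∞)×[0,∞) and all t ∈ (0,1), V_S(t·n0 + (1−t)·m0, t·n1 + (1−t)·m1) > t·V_S(n0,n1) + (1−t)·V_S(m0,m1). -/
/-- The denominator `D(n0,n1) = σ²(n0+n1+2 n0 n1) + (1+n0)(1+n1)`. -/
noncomputable def Dden (σ n0 n1 : ℝ) : ℝ :=
  σ^2 * (n0 + n1 + 2*n0*n1) + (1+n0)*(1+n1)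

/-- Forecaster value `V_L`. -/
noncomputable def VL (σ n0 n1 : ℝ) : ℝ :=
  σ^4 * (n0 + n1 + 2*n0*n1) / Dden σ n0 n1

/-- Nowcaster value `V_S`. -/
noncomputable def VS (σ n0 n1 : ℝ) : ℝ :=
  VL σ n0 n1 + (3*σ^2*n0*n1 + 2*σ^2*n1 + n1 + n0*n1) / Dden σ n0 n1

/-- Auxiliary Möbius function. -/
noncomputable def hAux (σ x : ℝ) : ℝ :=
  ((σ^2+1)*x + 1) / ((2*σ^2+1)*x + (σ^2+1))

lemma Laux_pos (σ x : ℝ) (hσ : 0 < σ) (hx : 0 ≤ x) :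
    0 < (2*σ^2+1)*x + (σ^2+1) := by nlinarith [sq_nonneg σ]

lemma hAux_pos (σ x : ℝ) (hσ : 0 < σ) (hx : 0 ≤ x) : 0 < hAux σ x := by
  apply div_pos (by nlinarith [sq_nonneg σ]) (Laux_pos σ x hσ hx)

lemma Dden_pos (σ n0 n1 : ℝ) (hσ : 0 < σ) (h0 : 0 ≤ n0) (h1 : 0 ≤ n1) :
    0 < Dden σ n0 n1 := by
  unfold Dden
  nlinarith [sq_nonneg σ, mul_nonneg h0 h1]

lemma VS_eq (σ n0 n1 : ℝ) (hσ : 0 < σ) (h0 : 0 ≤ n0) (h1 : 0 ≤ n1) :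
    VS σ n0 n1 = σ^2 + 1 - 1 / (n1 + hAux σ n0) := by
  have hD := Dden_pos σ n0 n1 hσ h0 h1
  have hL := Laux_pos σ n0 hσ h0
  have hh := hAux_pos σ n0 hσ h0
  have hF : 0 < n1 + hAux σ n0 := by positivity
  unfold VS VL hAux Dden at *
  field_simp
  ring

/-- strict convexity of 1/x for positives. -/
lemma inv_combo_lt (u v t : ℝ) (hu : 0 < u) (hv : 0 < v) (huv : u ≠ v)
    (ht0 : 0 < t) (ht1 : t < 1) :
    1 / (t*u + (1-t)*v) < t/u + (1-t)/v := by
  have hc : 0 < t*u + (1-t)*v := by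
    have := sub_pos.2 ht1; positivity
  rw [div_add_div _ _ hu.ne' hv.ne', div_lt_div_iff₀ hc (mul_pos hu hv)]
  nlinarith [mul_pos (mul_pos ht0 (sub_pos.2 ht1)) (sq_pos_of_ne_zero (sub_ne_zero.2 huv))]

lemma inv_combo_le (u v t : ℝ) (hu : 0 < u) (hv : 0 < v)
    (ht0 : 0 < t) (ht1 : t < 1) :
    1 / (t*u + (1-t)*v) ≤ t/u + (1-t)/v := by
  have hc : 0 < t*u + (1-t)*v := by
    have := sub_pos.2 ht1; positivity
  rw [div_add_div _ _ hu.ne' hv.ne', div_le_div_iff₀ hc (mul_pos hu hv)]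
  nlinarith [mul_nonneg (mul_nonneg ht0.le (sub_pos.2 ht1).le) (sq_nonneg (u-v))]

lemma hAux_strict_concave (σ x y t : ℝ) (hσ : 0 < σ) (hx : 0 ≤ x) (hy : 0 ≤ y)
    (hxy : x ≠ y) (ht0 : 0 < t) (ht1 : t < 1) :
    t * hAux σ x + (1-t) * hAux σ y < hAux σ (t*x + (1-t)*y) := by
  have hLx := Laux_pos σ x hσ hx
  have hLy := Laux_pos σ y hσ hy
  have hq : 0 ≤ t*x + (1-t)*y := by
    have := sub_pos.2 ht1; positivity
  have hLq := Laux_pos σ _ hσ hq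
  unfold hAux
  rw [mul_div_assoc', mul_div_assoc', div_add_div _ _ hLx.ne' hLy.ne',
    div_lt_div_iff₀ (mul_pos hLx hLy) hLq]
  nlinarith [mul_pos (mul_pos (mul_pos ht0 (sub_pos.2 ht1))
      (sq_pos_of_ne_zero (sub_ne_zero.2 hxy))) (pow_pos hσ 4), sq_nonneg σ,
    mul_pos (mul_pos ht0 (sub_pos.2 ht1)) (sq_pos_of_ne_zero (sub_ne_zero.2 hxy))]

/-- `V_S` is strictly concave on `[0,∞) × [0,∞)`. -/
theorem stmt3 (σ : ℝ) (hσ : 0 < σ)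
    (n0 n1 m0 m1 t : ℝ)
    (hn0 : 0 ≤ n0) (hn1 : 0 ≤ n1) (hm0 : 0 ≤ m0) (hm1 : 0 ≤ m1)
    (hne : (n0, n1) ≠ (m0, m1)) (ht0 : 0 < t) (ht1 : t < 1) :
    t * VS σ n0 n1 + (1-t) * VS σ m0 m1 <
      VS σ (t*n0 + (1-t)*m0) (t*n1 + (1-t)*m1) := by
  have ht1' : 0 < 1 - t := sub_pos.2 ht1
  have hq0 : 0 ≤ t*n0 + (1-t)*m0 := by positivity
  have hq1 : 0 ≤ t*n1 + (1-t)*m1 := by positivity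
  rw [VS_eq σ n0 n1 hσ hn0 hn1, VS_eq σ m0 m1 hσ hm0 hm1,
    VS_eq σ _ _ hσ hq0 hq1]
  set Fn := n1 + hAux σ n0 with hFn
  set Fm := m1 + hAux σ m0 with hFm
  set Fq := (t*n1 + (1-t)*m1) + hAux σ (t*n0 + (1-t)*m0) with hFq
  have hFnp : 0 < Fn := by have := hAux_pos σ n0 hσ hn0; positivity
  have hFmp : 0 < Fm := by have := hAux_pos σ m0 hσ hm0; positivity
  have key : 1 / Fq < t / Fn + (1-t) / Fm := by
    by_cases h00 : n0 = m0
    · -- then n1 ≠ m1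
      have h11 : n1 ≠ m1 := by
        intro h; exact hne (by rw [h00, h])
      have hFne : Fn ≠ Fm := by
        rw [hFn, hFm, h00]; intro h; exact h11 (by linarith)
      have hq : Fq = t * Fn + (1-t) * Fm := by
        rw [hFq, hFn, hFm, h00]
        have : t*m0 + (1-t)*m0 = m0 := by ring
        rw [this]; ring
      rw [hq]
      exact inv_combo_lt Fn Fm t hFnp hFmp hFne ht0 ht1
    · have hh := hAux_strict_concave σ n0 m0 t hσ hn0 hm0 h00 ht0 ht1
      have hcomb : t * Fn + (1-t) * Fm < Fq := by
        rw [hFn, hFm, hFq]; nlinarith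
      have hcp : 0 < t * Fn + (1-t) * Fm := by positivity
      calc 1 / Fq < 1 / (t * Fn + (1-t) * Fm) :=
            one_div_lt_one_div_of_lt hcp hcomb
        _ ≤ t / Fn + (1-t) / Fm := inv_combo_le Fn Fm t hFnp hFmp ht0 ht1
  have e1 : t / Fn = t * (1 / Fn) := by ring
  have e2 : (1-t) / Fm = (1-t) * (1 / Fm) := by ring
  rw [e1, e2] at key
  nlinarith [key]
end

section
/- Second-best allocation (relaxed screening problem): fix n0, n1 ≥ 0 and λ ∈ (0,1], and define on the box B = [0,n0]×[0,n1]×[0,n0]×[0,n1] the relaxed objective Φ(q0L, q1L, q0S, q1S) = λ·( V_S(q0S,q1S) − V_S(q0L,q1L) + V_L(q0L,q1L) ) + (1−λ)·V_L(q0L,q1L). Then: (a) if λ > λ*(n0), the point (q0L,q1L,q0S,q1S) = (n0, 0, n0, n1) is a maximizer of Φ on B; (b) if λ < λ*(n0), the point (n0, n1, n0, n1) is a maximizer of Φ on B. -/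
/-- The threshold `λ*(q0)`. -/
noncomputable def lamStar (σ q0 : ℝ) : ℝ :=
  (σ^2 * (q0+1) / ((q0+1) + σ^2 * (2*q0+1)))^2

/-!
The objective separates as `λ·V_S(q_S) + (V_L - λ·V_S)(q_L)`, so the two halves can be
maximized independently. `V_L` and `V_S` are quotients by the common denominator `D`, with
numerators and `D` affine in each coordinate, so every coordinatewise difference is an explicit
fraction over a product of two values of `D`. Hence `V_S` increases in both coordinates, and
`V_L - λ·V_S` increases in `q0` (as `λ ≤ 1 ≤ (1+q1)²`) while in `q1` it moves with the sign of
`λ*(q0) - λ`: decreasing above the threshold, increasing below it.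
-/

lemma Dden_pos_s12 (σ : ℝ) {x y : ℝ} (hx : 0 ≤ x) (hy : 0 ≤ y) : 0 < Dden σ x y := by
  unfold Dden; positivity

lemma VL_sub_VL_fst (σ : ℝ) {a b y : ℝ} (ha : Dden σ a y ≠ 0) (hb : Dden σ b y ≠ 0) :
    VL σ b y - VL σ a y = (b - a) * σ^4 * (1 + y)^2 / (Dden σ a y * Dden σ b y) := by
  unfold VL
  field_simp
  unfold Dden
  ring

lemma VS_sub_VS_fst (σ : ℝ) {a b y : ℝ} (ha : Dden σ a y ≠ 0) (hb : Dden σ b y ≠ 0) :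
    VS σ b y - VS σ a y = (b - a) * σ^4 / (Dden σ a y * Dden σ b y) := by
  unfold VS VL
  field_simp
  unfold Dden
  ring

lemma VL_sub_VL_snd (σ : ℝ) {x c d : ℝ} (hc : Dden σ x c ≠ 0) (hd : Dden σ x d ≠ 0) :
    VL σ x d - VL σ x c = (d - c) * (σ^2 * (x + 1))^2 / (Dden σ x c * Dden σ x d) := by
  unfold VL
  field_simp
  unfold Dden
  ring

lemma VS_sub_VS_snd (σ : ℝ) {x c d : ℝ} (hc : Dden σ x c ≠ 0) (hd : Dden σ x d ≠ 0) :
    VS σ x d - VS σ x c =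
      (d - c) * ((x + 1) + σ^2 * (2*x + 1))^2 / (Dden σ x c * Dden σ x d) := by
  unfold VS VL
  field_simp
  unfold Dden
  ring

lemma VS_le_VS (σ : ℝ) {a b c d : ℝ} (ha : 0 ≤ a) (hab : a ≤ b) (hc : 0 ≤ c) (hcd : c ≤ d) :
    VS σ a c ≤ VS σ b d := by
  have hb := ha.trans hab
  have hDac := Dden_pos_s12 σ ha hc
  have hDbc := Dden_pos_s12 σ hb hc
  have hDbd := Dden_pos_s12 σ hb (hc.trans hcd)
  have hab' := sub_nonneg.2 hab
  have hcd' := sub_nonneg.2 hcd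
  calc VS σ a c ≤ VS σ b c := by
        rw [← sub_nonneg, VS_sub_VS_fst σ hDac.ne' hDbc.ne']; positivity
    _ ≤ VS σ b d := by
        rw [← sub_nonneg, VS_sub_VS_snd σ hDbc.ne' hDbd.ne']; positivity

lemma VL_sub_mul_VS_le_fst (σ : ℝ) {lam a b y : ℝ} (hlam : lam ≤ 1) (ha : 0 ≤ a) (hab : a ≤ b)
    (hy : 0 ≤ y) : VL σ a y - lam * VS σ a y ≤ VL σ b y - lam * VS σ b y := by
  have hDa := Dden_pos_s12 σ ha hy
  have hDb := Dden_pos_s12 σ (ha.trans hab) hy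
  have hab' := sub_nonneg.2 hab
  have hlam' : 0 ≤ (1 + y)^2 - lam := by nlinarith
  have key : (VL σ b y - lam * VS σ b y) - (VL σ a y - lam * VS σ a y) =
      (b - a) * σ^4 * ((1 + y)^2 - lam) / (Dden σ a y * Dden σ b y) := by
    rw [sub_sub_sub_comm, ← mul_sub, VL_sub_VL_fst σ hDa.ne' hDb.ne',
      VS_sub_VS_fst σ hDa.ne' hDb.ne']
    ring
  rw [← sub_nonneg, key]
  positivity

lemma lamStar_mul_sq (σ : ℝ) {x : ℝ} (hx : 0 ≤ x) :
    lamStar σ x * ((x + 1) + σ^2 * (2*x + 1))^2 = (σ^2 * (x + 1))^2 := by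
  have : (x + 1) + σ^2 * (2*x + 1) ≠ 0 := by positivity
  rw [lamStar, div_pow, div_mul_cancel₀ _ (pow_ne_zero 2 this)]

lemma VL_sub_mul_VS_sub_snd (σ lam : ℝ) {x c d : ℝ} (hx : 0 ≤ x) (hc : 0 ≤ c) (hd : 0 ≤ d) :
    (VL σ x d - lam * VS σ x d) - (VL σ x c - lam * VS σ x c) =
      (d - c) * ((x + 1) + σ^2 * (2*x + 1))^2 * (lamStar σ x - lam)
        / (Dden σ x c * Dden σ x d) := by
  have hDc := (Dden_pos_s12 σ hx hc).ne'
  have hDd := (Dden_pos_s12 σ hx hd).ne'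
  rw [sub_sub_sub_comm, ← mul_sub, VL_sub_VL_snd σ hDc hDd, VS_sub_VS_snd σ hDc hDd,
    ← lamStar_mul_sq σ hx]
  ring

lemma VL_sub_mul_VS_antitone_snd (σ : ℝ) {lam x c d : ℝ} (hlam : lamStar σ x ≤ lam)
    (hx : 0 ≤ x) (hc : 0 ≤ c) (hcd : c ≤ d) :
    VL σ x d - lam * VS σ x d ≤ VL σ x c - lam * VS σ x c := by
  have hDc := Dden_pos_s12 σ hx hc
  have hDd := Dden_pos_s12 σ hx (hc.trans hcd)
  rw [← sub_nonpos, VL_sub_mul_VS_sub_snd σ lam hx hc (hc.trans hcd)]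
  exact div_nonpos_of_nonpos_of_nonneg
    (mul_nonpos_of_nonneg_of_nonpos (by nlinarith) (by linarith)) (by positivity)

lemma VL_sub_mul_VS_monotone_snd (σ : ℝ) {lam x c d : ℝ} (hlam : lam ≤ lamStar σ x)
    (hx : 0 ≤ x) (hc : 0 ≤ c) (hcd : c ≤ d) :
    VL σ x c - lam * VS σ x c ≤ VL σ x d - lam * VS σ x d := by
  have hDc := Dden_pos_s12 σ hx hc
  have hDd := Dden_pos_s12 σ hx (hc.trans hcd)
  have hcd' := sub_nonneg.2 hcd
  have hlam' := sub_nonneg.2 hlam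
  rw [← sub_nonneg, VL_sub_mul_VS_sub_snd σ lam hx hc (hc.trans hcd)]
  positivity

theorem stmt12_general (σ : ℝ) (n0 n1 : ℝ) (h0 : 0 ≤ n0)
    (lam : ℝ) (hl0 : 0 < lam) (hl1 : lam ≤ 1) :
    (lamStar σ n0 < lam →
      ∀ q0L q1L q0S q1S : ℝ,
        0 ≤ q0L → q0L ≤ n0 → 0 ≤ q1L → q1L ≤ n1 →
        0 ≤ q0S → q0S ≤ n0 → 0 ≤ q1S → q1S ≤ n1 →
        lam * (VS σ q0S q1S - VS σ q0L q1L + VL σ q0L q1L)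
            + (1-lam) * VL σ q0L q1L ≤
        lam * (VS σ n0 n1 - VS σ n0 0 + VL σ n0 0) + (1-lam) * VL σ n0 0) ∧
    (lam < lamStar σ n0 →
      ∀ q0L q1L q0S q1S : ℝ,
        0 ≤ q0L → q0L ≤ n0 → 0 ≤ q1L → q1L ≤ n1 →
        0 ≤ q0S → q0S ≤ n0 → 0 ≤ q1S → q1S ≤ n1 →
        lam * (VS σ q0S q1S - VS σ q0L q1L + VL σ q0L q1L)
            + (1-lam) * VL σ q0L q1L ≤
        lam * (VS σ n0 n1 - VS σ n0 n1 + VL σ n0 n1) + (1-lam) * VL σ n0 n1) := by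
  refine ⟨fun hlam q0L q1L q0S q1S h0L h0L' h1L _ h0S h0S' h1S h1S' => ?_,
    fun hlam q0L q1L q0S q1S h0L h0L' h1L h1L' h0S h0S' h1S h1S' => ?_⟩
  · have hS := mul_le_mul_of_nonneg_left (VS_le_VS σ h0S h0S' h1S h1S') hl0.le
    have hL := (VL_sub_mul_VS_le_fst σ hl1 h0L h0L' h1L).trans
      (VL_sub_mul_VS_antitone_snd σ hlam.le h0 le_rfl h1L)
    linarith
  · have hS := mul_le_mul_of_nonneg_left (VS_le_VS σ h0S h0S' h1S h1S') hl0.le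
    have hL := (VL_sub_mul_VS_le_fst σ hl1 h0L h0L' h1L).trans
      (VL_sub_mul_VS_monotone_snd σ hlam.le h0 h1L h1L')
    linarith

/-- Second-best allocation in the relaxed screening problem: if `λ > λ*(n0)` the
allocation `(n0,0,n0,n1)` maximizes the relaxed objective on the box, while if
`λ < λ*(n0)` the full-access allocation `(n0,n1,n0,n1)` maximizes it. -/
theorem stmt12 (σ : ℝ) (hσ : 0 < σ) (n0 n1 : ℝ) (h0 : 0 ≤ n0) (h1 : 0 ≤ n1)
    (lam : ℝ) (hl0 : 0 < lam) (hl1 : lam ≤ 1) :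
    (lamStar σ n0 < lam →
      ∀ q0L q1L q0S q1S : ℝ,
        0 ≤ q0L → q0L ≤ n0 → 0 ≤ q1L → q1L ≤ n1 →
        0 ≤ q0S → q0S ≤ n0 → 0 ≤ q1S → q1S ≤ n1 →
        lam * (VS σ q0S q1S - VS σ q0L q1L + VL σ q0L q1L)
            + (1-lam) * VL σ q0L q1L ≤
        lam * (VS σ n0 n1 - VS σ n0 0 + VL σ n0 0) + (1-lam) * VL σ n0 0) ∧
    (lam < lamStar σ n0 →
      ∀ q0L q1L q0S q1S : ℝ,
        0 ≤ q0L → q0L ≤ n0 → 0 ≤ q1L → q1L ≤ n1 →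
        0 ≤ q0S → q0S ≤ n0 → 0 ≤ q1S → q1S ≤ n1 →
        lam * (VS σ q0S q1S - VS σ q0L q1L + VL σ q0L q1L)
            + (1-lam) * VL σ q0L q1L ≤
        lam * (VS σ n0 n1 - VS σ n0 n1 + VL σ n0 n1) + (1-lam) * VL σ n0 n1) :=
  stmt12_general σ n0 n1 h0 lam hl0 hl1
end
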